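/- arXiv:1701.05510 — 2 statements merged into one kernel-verified Lean document; each statement's English description precedes it below -/
import Mathlib

section
/- A V-functor is a P-embedding if and only if it is fully faithful: for a V-functor f : (X,a) → (Y,b) between V-categories, one has P^*f (Pf φ) = φ for every presheaf φ on (X,a) — explicitly, ⨆_{x'∈X} b(f x, f x') ⊗ φ(x') = φ(x) for all presheaves φ and all x ∈ X — if and only if a(x,x') = b(f x, f x') for all x, x' ∈ X. -/
/-!
Context: `V` is a commutative unital quantale, modelled as a complete lattice
with a commutative monoid structure (unit `k = 1`, tensor `⊗ = *`) satisfying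
the quantale distributivity law (`IsQuantale`).  The residuation `u ⇨ w` is
`sSup {v | u * v ≤ w}`.
-/

universe u v

variable {V : Type u}

/-- Residuation in a quantale: `u ⇨ w = sSup {v | u * v ≤ w}`. -/
noncomputable def resid [CompleteLattice V] [Mul V] (u w : V) : V :=
  sSup {v | u * v ≤ w}

/-- `(X, a)` is a `V`-category: `k ≤ a x x` and `a x y ⊗ a y z ≤ a x z`. -/
def IsVCat [CompleteLattice V] [CommMonoid V] {X : Type v} (a : X → X → V) : Prop :=
  (∀ x, (1 : V) ≤ a x x) ∧ ∀ x y z, a x y * a y z ≤ a x z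

/-- A presheaf on the `V`-category `(X, a)`: `a x x' ⊗ φ x' ≤ φ x`. -/
def IsPresheaf [CompleteLattice V] [Mul V] {X : Type v} (a : X → X → V) (φ : X → V) : Prop :=
  ∀ x x', a x x' * φ x' ≤ φ x

/-- The `V`-category structure on presheaves: `â(φ, ψ) = ⨅ x, (φ x ⇨ ψ x)`. -/
noncomputable def ahat [CompleteLattice V] [Mul V] {X : Type v} (φ ψ : X → V) : V :=
  ⨅ x, resid (φ x) (ψ x)

/-- A `V`-functor is a `P`-embedding (`P^* f ∘ P f = id`) iff it is fully
faithful. -/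
theorem p_embedding_iff_fully_faithful [CompleteLattice V] [CommMonoid V] [IsQuantale V]
    {X Y : Type v} (a : X → X → V) (b : Y → Y → V)
    (ha : IsVCat a) (hb : IsVCat b)
    (f : X → Y) (hf : ∀ x x', a x x' ≤ b (f x) (f x')) :
    (∀ φ : X → V, IsPresheaf a φ → ∀ x, (⨆ x', b (f x) (f x') * φ x') = φ x) ↔
      ∀ x x', a x x' = b (f x) (f x') := by
  constructor
  · intro h x x'
    have hpre : IsPresheaf a (fun z => a z x') := fun z z' => ha.2 z z' x'
    have hx := h _ hpre x
    refine le_antisymm (hf x x') ?_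
    calc b (f x) (f x') = b (f x) (f x') * 1 := (mul_one _).symm
      _ ≤ b (f x) (f x') * a x' x' := mul_le_mul_right (ha.1 x') _
      _ ≤ ⨆ z, b (f x) (f z) * a z x' := le_iSup (fun z => b (f x) (f z) * a z x') x'
      _ = a x x' := hx
  · intro h φ hφ x
    refine le_antisymm (iSup_le fun x' => ?_) ?_
    · rw [← h]; exact hφ x x'
    · calc φ x = 1 * φ x := (one_mul _).symm
        _ ≤ a x x * φ x := mul_le_mul_left (ha.1 x) _
        _ = b (f x) (f x) * φ x := by rw [h]
        _ ≤ ⨆ x', b (f x) (f x') * φ x' := le_iSup (fun x' => b (f x) (f x') * φ x') x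
end

section
/- Key identity for the simplicity of the presheaf monad: let f : (X,a) → (Y,b) be a V-functor between V-categories and let Kf = {(φ,y) ∈ PX × Y | ∀ y' ∈ Y, ⨆_{x∈X} b(y', f x) ⊗ φ(x) ≤ b(y', y)}. Then for every x ∈ X and every (φ,y) ∈ Kf, ( ⨅_{x'∈X} (a(x',x) ⇨ φ(x')) ) ⊓ b(f x, y) = φ(x); that is, (Lf)_* = q_f^* ∘ (y_X)_*, where Lf x = (a(−,x), f x). -/
/-!
Context: `V` is a commutative unital quantale, modelled as a complete lattice
with a commutative monoid structure (unit `k = 1`, tensor `⊗ = *`) satisfying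
the quantale distributivity law (`IsQuantale`).  The residuation `u ⇨ w` is
`sSup {v | u * v ≤ w}`.
-/

universe u v

variable {V : Type u}

section Quantale

variable [CompleteLattice V] [CommMonoid V] [IsQuantale V]

theorem le_resid_iff {u w z : V} : z ≤ resid u w ↔ u * z ≤ w :=
  Quantale.rightMulResiduation_le_iff_mul_le

theorem resid_le_of_one_le {u w : V} (hu : 1 ≤ u) : resid u w ≤ w :=
  calc resid u w = 1 * resid u w := (one_mul _).symm
    _ ≤ u * resid u w := mul_le_mul_left hu _
    _ ≤ w := le_resid_iff.mp le_rfl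

/-- The Yoneda lemma `â(y_X x, φ) = φ x`, where `y_X x = a(-, x)`. -/
theorem ahat_yoneda_eq {X : Type*} {a : X → X → V} (ha : ∀ x, 1 ≤ a x x) {φ : X → V}
    (hφ : IsPresheaf a φ) (x : X) : ahat (fun x' => a x' x) φ = φ x :=
  le_antisymm ((iInf_le _ x).trans (resid_le_of_one_le (ha x)))
    (le_iInf fun x' => le_resid_iff.mpr (hφ x' x))

theorem le_of_iSup_mul_le {X Y : Type*} {b : Y → Y → V} {f : X → Y} {φ : X → V} {y : Y}
    {x : X} (hK : (⨆ x', b (f x) (f x') * φ x') ≤ b (f x) y) (hx : 1 ≤ b (f x) (f x)) :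
    φ x ≤ b (f x) y :=
  calc φ x = 1 * φ x := (one_mul _).symm
    _ ≤ b (f x) (f x) * φ x := mul_le_mul_left hx _
    _ ≤ ⨆ x', b (f x) (f x') * φ x' := le_iSup (fun x' => b (f x) (f x') * φ x') x
    _ ≤ b (f x) y := hK

end Quantale

theorem presheaf_simplicity_key_identity_general [CompleteLattice V] [CommMonoid V] [IsQuantale V]
    {X Y : Type v} (a : X → X → V) (b : Y → Y → V)
    (ha : IsVCat a)
    (f : X → Y) (hf : ∀ x x', a x x' ≤ b (f x) (f x'))
    (φ : X → V) (y : Y) (hφ : IsPresheaf a φ)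
    (hKf : ∀ y', (⨆ x, b y' (f x) * φ x) ≤ b y' y) (x : X) :
    ((⨅ x', resid (a x' x) (φ x')) ⊓ b (f x) y) = φ x := by
  have hyoneda : (⨅ x', resid (a x' x) (φ x')) = φ x := ahat_yoneda_eq ha.1 hφ x
  have hle : φ x ≤ b (f x) y := le_of_iSup_mul_le (hKf (f x)) ((ha.1 x).trans (hf x x))
  rw [hyoneda, inf_eq_left.mpr hle]

/-- Key identity for the simplicity of the presheaf monad:
`(Lf)_* = q_f^* ∘ (y_X)_*`, i.e. for `(φ, y) ∈ K f`,
`â(y_X x, φ) ⊓ b (f x) y = φ x`. -/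
theorem presheaf_simplicity_key_identity [CompleteLattice V] [CommMonoid V] [IsQuantale V]
    {X Y : Type v} (a : X → X → V) (b : Y → Y → V)
    (ha : IsVCat a) (hb : IsVCat b)
    (f : X → Y) (hf : ∀ x x', a x x' ≤ b (f x) (f x'))
    (φ : X → V) (y : Y) (hφ : IsPresheaf a φ)
    (hKf : ∀ y', (⨆ x, b y' (f x) * φ x) ≤ b y' y) (x : X) :
    ((⨅ x', resid (a x' x) (φ x')) ⊓ b (f x) y) = φ x :=
  presheaf_simplicity_key_identity_general a b ha f hf φ y hφ hKf x
end
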